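/- Let P be an n×K matrix with PᵀP invertible, f ∈ ℝⁿ, and α ∈ ℝ^K. Let α̃ = (PᵀP)⁻¹Pᵀf be the least squares coefficient vector. If n⁻¹‖f − Pα‖² ≤ ε² and the smallest eigenvalue of PᵀP/n is at least λ > 0, then ‖α̃ − α‖² ≤ ε²/λ. -/
import Mathlib


open Matrix

theorem stmt_9 {n K : ℕ} (P : Matrix (Fin n) (Fin K) ℝ)
    (h : IsUnit (Pᵀ * P).det) (f : Fin n → ℝ) (α : Fin K → ℝ) (ε lam : ℝ)
    (hlam : 0 < lam)
    (happrox : (n : ℝ)⁻¹ * ∑ i, (f i - P.mulVec α i) ^ 2 ≤ ε ^ 2)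
    (heig : ∀ v : Fin K → ℝ, lam * ∑ k, v k ^ 2 ≤ v ⬝ᵥ ((n : ℝ)⁻¹ • (Pᵀ * P)).mulVec v) :
    ∑ k, ((Pᵀ * P)⁻¹.mulVec (Pᵀ.mulVec f) k - α k) ^ 2 ≤ ε ^ 2 / lam := by
  set r : Fin n → ℝ := f - P.mulVec α with hr
  set d : Fin K → ℝ := (Pᵀ * P)⁻¹.mulVec (Pᵀ.mulVec f) - α with hd
  have key : (Pᵀ * P)⁻¹.mulVec (Pᵀ.mulVec (P.mulVec α)) = α := by
    rw [Matrix.mulVec_mulVec, Matrix.mulVec_mulVec, Matrix.mul_assoc,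
      Matrix.nonsing_inv_mul _ h, Matrix.one_mulVec]
  have hdr : d = (Pᵀ * P)⁻¹.mulVec (Pᵀ.mulVec r) := by
    rw [hd, hr, Matrix.mulVec_sub, Matrix.mulVec_sub, key]
  -- Pᵀ (r - P d) = 0
  have hortho : Pᵀ.mulVec (r - P.mulVec d) = 0 := by
    rw [Matrix.mulVec_sub, hdr]
    rw [Matrix.mulVec_mulVec, Matrix.mulVec_mulVec,
      Matrix.mul_nonsing_inv _ h, Matrix.one_mulVec, sub_self]
  -- ‖P d‖² ≤ ‖r‖²
  have hcross : (P.mulVec d) ⬝ᵥ (r - P.mulVec d) = 0 := by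
    have h0 : d ⬝ᵥ (Pᵀ.mulVec (r - P.mulVec d)) = 0 := by
      rw [hortho]; simp
    rwa [Matrix.dotProduct_mulVec, Matrix.vecMul_transpose] at h0
  have hproj : ∑ i, (P.mulVec d i) ^ 2 ≤ ∑ i, r i ^ 2 := by
    have expand : ∑ i, r i ^ 2 = ∑ i, (P.mulVec d i) ^ 2
        + 2 * ((P.mulVec d) ⬝ᵥ (r - P.mulVec d))
        + ∑ i, (r i - P.mulVec d i) ^ 2 := by
      simp only [dotProduct, Pi.sub_apply, ← Finset.sum_add_distrib,
        Finset.mul_sum]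
      apply Finset.sum_congr rfl
      intro i _
      ring
    have hnn : (0:ℝ) ≤ ∑ i, (r i - P.mulVec d i) ^ 2 :=
      Finset.sum_nonneg fun i _ => sq_nonneg _
    rw [expand, hcross]
    linarith
  -- quadratic form identity
  have hquad : d ⬝ᵥ ((n : ℝ)⁻¹ • (Pᵀ * P)).mulVec d
      = (n : ℝ)⁻¹ * ∑ i, (P.mulVec d i) ^ 2 := by
    rw [Matrix.smul_mulVec, dotProduct_smul, smul_eq_mul]
    congr 1
    rw [← Matrix.mulVec_mulVec, Matrix.dotProduct_mulVec, Matrix.vecMul_transpose]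
    simp [dotProduct, sq]
  have hmain : lam * ∑ k, d k ^ 2 ≤ ε ^ 2 := by
    have h1 := heig d
    rw [hquad] at h1
    have h2 : (n : ℝ)⁻¹ * ∑ i, (P.mulVec d i) ^ 2 ≤ (n : ℝ)⁻¹ * ∑ i, r i ^ 2 :=
      mul_le_mul_of_nonneg_left hproj (by positivity)
    have h3 : (n : ℝ)⁻¹ * ∑ i, r i ^ 2 ≤ ε ^ 2 := by
      simpa [hr] using happrox
    linarith
  have : ∑ k, d k ^ 2 ≤ ε ^ 2 / lam := by
    rw [le_div_iff₀ hlam]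
    linarith [hmain]
  simpa [hd] using this
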